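/- Let s = (s_1,…,s_r) and t = (t_1,…,t_r) be r-tuples of non-negative integers and ζ a primitive n-th root of unity. Then the star sum satisfies H*_{n−1}(s; t; ζ) = (−1)^{w(s)} · H*_{n−1}(s̄; s̄ − t̄; ζ), where s̄ is the reverse of s and w(s) = s_1 + ⋯ + s_r. -/

import Mathlib

open Finset

/-- The q-analog of a natural number: `[k]_q = (1 - q^k)/(1 - q)`. -/
noncomputable def qnum (q : ℂ) (k : ℕ) : ℂ := (1 - q ^ k) / (1 - q)

/-- Nested sum for the star sum `H*_n(s;t;q)`, recursing from the top index;
the list is the reversed list of pairs `(s_i, t_i)`.  The inner bound is `k`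
(weak inequalities). -/
noncomputable def HstarRev (q : ℂ) : ℕ → List (ℕ × ℤ) → ℂ
  | _, [] => 1
  | n, (s, t) :: rest =>
      ∑ k ∈ Finset.Icc 1 n, q ^ ((k : ℤ) * t) / qnum q k ^ s * HstarRev q k rest

/-- `Hstar q n s t = H*_n(s;t;q) = Σ_{1 ≤ k_1 ≤ ⋯ ≤ k_r ≤ n} ∏ q^{k_i t_i}/[k_i]_q^{s_i}`. -/
noncomputable def Hstar (q : ℂ) (n : ℕ) (s : List ℕ) (t : List ℤ) : ℂ :=
  HstarRev q n (s.zip t).reverse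

/-!
Substitute `k ↦ n - k` in every summation index. This turns the chain
`1 ≤ k₁ ≤ ⋯ ≤ kᵣ ≤ n - 1` into the reversed chain, and since `ζ ^ (n - k) = ζ ^ (-k)` we have
`[n - k]_ζ = -ζ ^ (-k) [k]_ζ`, so each factor `ζ ^ (k t) / [k]_ζ ^ s` becomes
`(-1) ^ s ζ ^ ((n - k)(s - t)) / [n - k]_ζ ^ s`.
-/

section ChainSums

variable {R : Type*} [CommSemiring R]

/- `chainSumDown fs m` sums `∏ fᵢ kᵢ` over `m ≥ k₁ ≥ ⋯ ≥ kᵣ ≥ 1`, and `chainSumUp N fs lo` over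
`lo ≤ k₁ ≤ ⋯ ≤ kᵣ ≤ N`. -/
def chainSumDown : List (ℕ → R) → ℕ → R
  | [], _ => 1
  | f :: fs, m => ∑ k ∈ Icc 1 m, f k * chainSumDown fs k

def chainSumUp (N : ℕ) : List (ℕ → R) → ℕ → R
  | [], _ => 1
  | f :: fs, lo => ∑ k ∈ Icc lo N, f k * chainSumUp N fs k

theorem chainSumUp_append_singleton (N : ℕ) (fs : List (ℕ → R)) (g : ℕ → R) (lo : ℕ) :
    chainSumUp N (fs ++ [g]) lo = ∑ k ∈ Icc lo N, g k * chainSumUp k fs lo := by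
  induction fs generalizing lo with
  | nil => simp [chainSumUp]
  | cons f fs ih =>
    simp only [List.cons_append, chainSumUp, ih, mul_sum]
    rw [sum_comm' (t' := Icc lo N) (s' := fun k => Icc lo k) fun j k => by
      simp only [mem_Icc]; omega]
    exact sum_congr rfl fun _ _ => sum_congr rfl fun _ _ => mul_left_comm _ _ _

theorem chainSumUp_one_eq_chainSumDown_reverse (N : ℕ) (fs : List (ℕ → R)) :
    chainSumUp N fs 1 = chainSumDown fs.reverse N := by
  induction fs using List.reverseRecOn generalizing N with
  | nil => rfl
  | append_singleton fs g ih =>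
    simp only [chainSumUp_append_singleton, List.reverse_append, List.reverse_singleton,
      List.singleton_append, chainSumDown, ih]

theorem chainSumDown_map_eq_prod_mul_chainSumUp {ι : Type*} {f g : ι → ℕ → R} {c : ι → R}
    {n : ℕ} (hfg : ∀ i k, k ≤ n → f i k = c i * g i (n - k)) (L : List ι) {m : ℕ} (hm : m < n) :
    chainSumDown (L.map f) m = (L.map c).prod * chainSumUp (n - 1) (L.map g) (n - m) := by
  induction L generalizing m with
  | nil => simp [chainSumDown, chainSumUp]
  | cons i L ih =>
    simp only [List.map_cons, chainSumDown, chainSumUp, List.prod_cons, mul_sum]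
    refine sum_nbij' (n - ·) (n - ·) ?_ ?_ ?_ ?_ fun k hk => ?_
    iterate 4 (intro k hk; simp only [mem_Icc] at hk ⊢; omega)
    rw [mem_Icc] at hk
    rw [ih (by omega), hfg i k (by omega)]
    ring

end ChainSums

noncomputable def qterm (q : ℂ) (p : ℕ × ℤ) (k : ℕ) : ℂ := q ^ ((k : ℤ) * p.2) / qnum q k ^ p.1

def dualPair (p : ℕ × ℤ) : ℕ × ℤ := (p.1, p.1 - p.2)

theorem HstarRev_eq_chainSumDown (q : ℂ) (L : List (ℕ × ℤ)) (m : ℕ) :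
    HstarRev q m L = chainSumDown (L.map (qterm q)) m := by
  induction L generalizing m with
  | nil => rfl
  | cons p L ih => simp only [HstarRev, List.map_cons, chainSumDown, qterm, ih]

theorem pow_sub_eq_inv_of_pow_eq_one {M : Type*} [GroupWithZero M] {ζ : M} {n k : ℕ} (hζn : ζ ^ n = 1) (hζ : ζ ≠ 0)
    (hk : k ≤ n) : ζ ^ (n - k) = (ζ ^ k)⁻¹ := by
  rw [pow_sub₀ ζ hζ hk, hζn, one_mul]

theorem qnum_sub_of_pow_eq_one {ζ : ℂ} {n k : ℕ} (hζn : ζ ^ n = 1) (hζ : ζ ≠ 0) (hk : k ≤ n) :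
    qnum ζ (n - k) = -(ζ ^ k)⁻¹ * qnum ζ k := by
  have hζk : ζ ^ k ≠ 0 := pow_ne_zero k hζ
  simp only [qnum, pow_sub_eq_inv_of_pow_eq_one hζn hζ hk]
  field_simp
  ring

theorem qterm_eq_neg_one_pow_mul_qterm_dualPair {ζ : ℂ} {n : ℕ} (hζn : ζ ^ n = 1) (hζ : ζ ≠ 0)
    (p : ℕ × ℤ) {k : ℕ} (hk : k ≤ n) :
    qterm ζ p k = (-1) ^ p.1 * qterm ζ (dualPair p) (n - k) := by
  obtain ⟨a, b⟩ := p
  have hζk : ζ ^ k ≠ 0 := pow_ne_zero k hζ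
  have hzpow : ζ ^ (((n - k : ℕ) : ℤ) * (a - b)) = ζ ^ ((k : ℤ) * b) / (ζ ^ k) ^ a := by
    rw [zpow_mul, zpow_natCast, pow_sub_eq_inv_of_pow_eq_one hζn hζ hk, inv_zpow', neg_sub,
      zpow_sub₀ hζk, zpow_natCast, zpow_mul, zpow_natCast]
  simp only [qterm, dualPair, qnum_sub_of_pow_eq_one hζn hζ hk, hzpow]
  rw [mul_pow, neg_pow (ζ ^ k)⁻¹, inv_pow]
  field_simp

theorem List.prod_map_pow_eq_pow_sum {M ι : Type*} [Monoid M] (x : M) (f : ι → ℕ) (L : List ι) :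
    (L.map fun i => x ^ f i).prod = x ^ (L.map f).sum := by
  induction L with
  | nil => simp
  | cons i L ih => simp [ih, pow_add]

theorem zip_zipWith_sub (s : List ℕ) (t : List ℤ) :
    s.zip (List.zipWith (fun a b => (a : ℤ) - b) s t) = (s.zip t).map dualPair := by
  induction s generalizing t with
  | nil => simp
  | cons a s ih => cases t <;> simp_all [dualPair]

theorem stmt3_general (n : ℕ) (hn : 0 < n) (ζ : ℂ) (hζ : IsPrimitiveRoot ζ n)
    (s : List ℕ) (t : List ℤ) (hlen : s.length = t.length) :
    Hstar ζ (n - 1) s t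
      = (-1) ^ s.sum *
        Hstar ζ (n - 1) s.reverse (List.zipWith (fun a b => (a : ℤ) - b) s t).reverse := by
  have hdual : ∀ p k, k ≤ n → qterm ζ p k = (-1) ^ p.1 * qterm ζ (dualPair p) (n - k) :=
    fun p _ hk => qterm_eq_neg_one_pow_mul_qterm_dualPair hζ.pow_eq_one (hζ.ne_zero hn.ne') p hk
  have hzip : s.reverse.zip (List.zipWith (fun a b => (a : ℤ) - b) s t).reverse
      = ((s.zip t).map dualPair).reverse := by
    rw [← zip_zipWith_sub]
    exact (List.reverse_zipWith (by simp [hlen])).symm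
  rw [Hstar, Hstar, hzip, List.reverse_reverse, HstarRev_eq_chainSumDown,
    HstarRev_eq_chainSumDown,
    chainSumDown_map_eq_prod_mul_chainSumUp hdual _ (Nat.sub_lt hn one_pos),
    Nat.sub_sub_self (show 1 ≤ n from hn), chainSumUp_one_eq_chainSumDown_reverse]
  simp only [List.map_reverse, List.reverse_reverse, List.prod_reverse,
    List.prod_map_pow_eq_pow_sum, List.map_fst_zip hlen.le, List.map_map, Function.comp_def]

theorem stmt3 (n : ℕ) (hn : 0 < n) (ζ : ℂ) (hζ : IsPrimitiveRoot ζ n)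
    (s : List ℕ) (t : List ℤ) (hlen : s.length = t.length) (ht : ∀ x ∈ t, 0 ≤ x) :
    Hstar ζ (n - 1) s t
      = (-1) ^ s.sum *
        Hstar ζ (n - 1) s.reverse (List.zipWith (fun a b => (a : ℤ) - b) s t).reverse :=
  stmt3_general n hn ζ hζ s t hlen
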